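/- With K₁₂ := K ⊗ I_N and R₂₃ := I_N ⊗ R (N³×N³ matrices, I_N the N×N identity), one has K₁₂·R₂₃·K₁₂ = (r⁻¹s)^{2n}·K₁₂. (Corollary 3.16, the positive case.) -/

import Mathlib

open Matrix Finset
open scoped Kronecker

/-- The `N×N` matrix unit `E_{ab}` (1-based indices; zero if an index is out of range). -/
def Eunit (F : Type*) [Field F] (n a b : ℕ) :
    Matrix (Fin (2 * n + 1)) (Fin (2 * n + 1)) F :=
  Matrix.of fun i j => if (i : ℕ) + 1 = a ∧ (j : ℕ) + 1 = b then (1 : F) else 0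

/-- The primed index `i' = 2n+2−i`. -/
def pr (n i : ℕ) : ℕ := 2 * n + 2 - i

/-- The integers `m_i`: `m_i = 2n+1−2i` for `1 ≤ i ≤ n`, `m_{n+1} = 0`,
and `m_i = 2n+3−2i` for `n+2 ≤ i ≤ 2n+1`. -/
def mwt (n i : ℕ) : ℤ :=
  if i ≤ n then 2 * (n : ℤ) + 1 - 2 * (i : ℤ)
  else if i = n + 1 then 0
  else 2 * (n : ℤ) + 3 - 2 * (i : ℤ)

/-- The matrix `K = Σ_{i,j} t^{m_i−m_j} E_{i,j'} ⊗ E_{i',j}`. -/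
noncomputable def Kmat (F : Type*) [Field F] (n : ℕ) (t : F) :
    Matrix (Fin (2 * n + 1) × Fin (2 * n + 1)) (Fin (2 * n + 1) × Fin (2 * n + 1)) F :=
  ∑ i ∈ Icc 1 (2 * n + 1), ∑ j ∈ Icc 1 (2 * n + 1),
    t ^ (mwt n i - mwt n j) • (Eunit F n i (pr n j) ⊗ₖ Eunit F n (pr n i) j)

/-- The basic braided `R`-matrix of `U_{r,s}(so_{2n+1})` (Theorem 3.7). -/
noncomputable def Rmat (F : Type*) [Field F] (n : ℕ) (r s t : F) :
    Matrix (Fin (2 * n + 1) × Fin (2 * n + 1)) (Fin (2 * n + 1) × Fin (2 * n + 1)) F :=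
  (r⁻¹ * s) • (∑ i ∈ (Icc 1 (2 * n + 1)).erase (n + 1), Eunit F n i i ⊗ₖ Eunit F n i i)
  + (r⁻¹ * s⁻¹) • (
      (∑ i ∈ Icc 1 n, ∑ j ∈ Icc (i + 1) n, Eunit F n i j ⊗ₖ Eunit F n j i)
    + (∑ i ∈ Icc 2 n, ∑ j ∈ Icc (pr n (i - 1)) (pr n 1), Eunit F n i j ⊗ₖ Eunit F n j i)
    + (∑ i ∈ Icc 1 (n - 1), ∑ j ∈ Icc (pr n n) (pr n (i + 1)), Eunit F n j i ⊗ₖ Eunit F n i j)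
    + (∑ i ∈ Icc (pr n n) (pr n 2), ∑ j ∈ Icc (i + 1) (pr n 1), Eunit F n j i ⊗ₖ Eunit F n i j))
  + (r * s) • (
      (∑ i ∈ Icc 1 n, ∑ j ∈ Icc (i + 1) n, Eunit F n j i ⊗ₖ Eunit F n i j)
    + (∑ i ∈ Icc (pr n n) (pr n 2), ∑ j ∈ Icc (i + 1) (pr n 1), Eunit F n i j ⊗ₖ Eunit F n j i)
    + (∑ i ∈ Icc 2 n, ∑ j ∈ Icc (pr n (i - 1)) (pr n 1), Eunit F n j i ⊗ₖ Eunit F n i j)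
    + (∑ i ∈ Icc 1 (n - 1), ∑ j ∈ Icc (pr n n) (pr n (i + 1)), Eunit F n i j ⊗ₖ Eunit F n j i))
  + (∑ i ∈ (Icc 1 (2 * n + 1)).erase (n + 1), Eunit F n i (n + 1) ⊗ₖ Eunit F n (n + 1) i)
  + (∑ j ∈ (Icc 1 (2 * n + 1)).erase (n + 1), Eunit F n (n + 1) j ⊗ₖ Eunit F n j (n + 1))
  + (r * s⁻¹) • (∑ i ∈ (Icc 1 (2 * n + 1)).erase (n + 1), Eunit F n (pr n i) i ⊗ₖ Eunit F n i (pr n i))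
  + (r⁻¹ * s - r * s⁻¹) • (
      (∑ i ∈ Icc 1 (2 * n + 1), ∑ j ∈ Icc 1 (i - 1), Eunit F n i i ⊗ₖ Eunit F n j j)
    - (∑ i ∈ Icc 1 (2 * n + 1), ∑ j ∈ Icc 1 (i - 1),
        t ^ (mwt n i - mwt n j) • (Eunit F n i (pr n j) ⊗ₖ Eunit F n (pr n i) j)))
  + Eunit F n (n + 1) (n + 1) ⊗ₖ Eunit F n (n + 1) (n + 1)

/-- `K₁₂ = K ⊗ I_N`, viewed as an `N³ × N³` matrix (reindexed by associativity). -/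
noncomputable def K12 (F : Type*) [Field F] (n : ℕ) (t : F) :
    Matrix (Fin (2 * n + 1) × Fin (2 * n + 1) × Fin (2 * n + 1))
      (Fin (2 * n + 1) × Fin (2 * n + 1) × Fin (2 * n + 1)) F :=
  Matrix.reindex (Equiv.prodAssoc _ _ _) (Equiv.prodAssoc _ _ _)
    (Kmat F n t ⊗ₖ (1 : Matrix (Fin (2 * n + 1)) (Fin (2 * n + 1)) F))

/-- `R₂₃ = I_N ⊗ R`, an `N³ × N³` matrix. -/
noncomputable def R23 (F : Type*) [Field F] (n : ℕ) (r s t : F) :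
    Matrix (Fin (2 * n + 1) × Fin (2 * n + 1) × Fin (2 * n + 1))
      (Fin (2 * n + 1) × Fin (2 * n + 1) × Fin (2 * n + 1)) F :=
  (1 : Matrix (Fin (2 * n + 1)) (Fin (2 * n + 1)) F) ⊗ₖ Rmat F n r s t

section helpers
variable {F : Type*} [Field F] {n : ℕ}

lemma pr_pr {k : ℕ} (h1 : 1 ≤ k) (h2 : k ≤ 2 * n + 1) : pr n (pr n k) = k := by
  simp only [pr]; omega

lemma mwt_pr {k : ℕ} (h1 : 1 ≤ k) (h2 : k ≤ 2 * n + 1) : mwt n (pr n k) = - mwt n k := by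
  simp only [mwt, pr]
  have hcast : ((2 * n + 2 - k : ℕ) : ℤ) = 2 * (n : ℤ) + 2 - (k : ℤ) := by
    push_cast [Nat.cast_sub (by omega : k ≤ 2 * n + 2)]; ring
  split_ifs <;> (try rw [hcast]) <;> omega

/-- Bridge: sum over `Fin (2n+1)` of `f (v+1)` equals sum over `Icc 1 (2n+1)`. -/
lemma fin_sum_nat (f : ℕ → F) :
    ∑ v : Fin (2 * n + 1), f ((v : ℕ) + 1) = ∑ k ∈ Icc 1 (2 * n + 1), f k := by
  rw [Fin.sum_univ_eq_sum_range (fun i => f (i + 1))]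
  rw [show Icc 1 (2 * n + 1) = Finset.image (· + 1) (Finset.range (2 * n + 1)) by
    ext k
    simp only [Finset.mem_Icc, Finset.mem_image, Finset.mem_range]
    exact ⟨fun h => ⟨k - 1, by omega, by omega⟩, fun ⟨a, ha, hk⟩ => by omega⟩]
  rw [Finset.sum_image (fun a _ b _ h => by simpa using h)]

lemma fin_collapse {A : ℕ} (h1 : 1 ≤ A) (h2 : A ≤ 2 * n + 1) (f : ℕ → F) :
    ∑ p : Fin (2 * n + 1), (if (p : ℕ) + 1 = A then f ((p : ℕ) + 1) else 0) = f A := by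
  rw [fin_sum_nat (fun k => if k = A then f k else 0), Finset.sum_ite_eq']
  simp [h1, h2]

lemma fin_collapse' {A : ℕ} (h1 : 1 ≤ A) (h2 : A ≤ 2 * n + 1) (f : Fin (2 * n + 1) → F) :
    ∑ p : Fin (2 * n + 1), (if (p : ℕ) + 1 = A then f p else 0)
      = f ⟨A - 1, by omega⟩ := by
  rw [Finset.sum_eq_single (⟨A - 1, by omega⟩ : Fin (2 * n + 1))]
  · rw [if_pos (by simp; omega)]
  · intro b _ hb
    apply if_neg
    intro hc
    exact hb (Fin.ext (by simp; omega))
  · intro h; exact absurd (Finset.mem_univ _) h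

lemma Kmat_apply (t : F) (a b x y : Fin (2 * n + 1)) :
    Kmat F n t (a, b) (x, y) =
      if ((b : ℕ) + 1 = pr n ((a : ℕ) + 1) ∧ (x : ℕ) + 1 = pr n ((y : ℕ) + 1)) then
        t ^ (mwt n ((a : ℕ) + 1) - mwt n ((y : ℕ) + 1)) else 0 := by
  simp only [Kmat, Matrix.sum_apply, Matrix.smul_apply, Matrix.kroneckerMap_apply,
    Eunit, Matrix.of_apply, smul_eq_mul]
  rw [Finset.sum_eq_single ((a : ℕ) + 1)]
  · rw [Finset.sum_eq_single ((y : ℕ) + 1)]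
    · split_ifs with h1 h2 h3 <;> simp_all
    · intro j _ hj
      split_ifs with h1 h2 <;> simp_all
    · intro h; exact absurd (by simp; omega) h
  · intro i _ hi
    rw [Finset.sum_eq_zero]
    intro j _
    split_ifs with h1 h2 <;> simp_all
  · intro h; exact absurd (by simp; omega) h

end helpers

section rdiag
variable {F : Type*} [Field F] {n : ℕ}

lemma off1 (v c z : Fin (2 * n + 1)) :
    (∑ i ∈ Icc 1 n, ∑ j ∈ Icc (i + 1) n, Eunit F n i j ⊗ₖ Eunit F n j i) (v, c) (v, z) = 0 := by
  simp only [Matrix.sum_apply, Matrix.kroneckerMap_apply, Eunit, Matrix.of_apply]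
  refine Finset.sum_eq_zero fun i hi => Finset.sum_eq_zero fun j hj => ?_
  simp only [Finset.mem_Icc] at hi hj
  rw [if_neg (by omega), zero_mul]

lemma off2 (v c z : Fin (2 * n + 1)) :
    (∑ i ∈ Icc 2 n, ∑ j ∈ Icc (pr n (i - 1)) (pr n 1), Eunit F n i j ⊗ₖ Eunit F n j i) (v, c) (v, z) = 0 := by
  simp only [Matrix.sum_apply, Matrix.kroneckerMap_apply, Eunit, Matrix.of_apply]
  refine Finset.sum_eq_zero fun i hi => Finset.sum_eq_zero fun j hj => ?_
  simp only [Finset.mem_Icc, pr] at hi hj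
  rw [if_neg (by omega), zero_mul]

lemma off3 (v c z : Fin (2 * n + 1)) :
    (∑ i ∈ Icc 1 (n - 1), ∑ j ∈ Icc (pr n n) (pr n (i + 1)), Eunit F n j i ⊗ₖ Eunit F n i j) (v, c) (v, z) = 0 := by
  simp only [Matrix.sum_apply, Matrix.kroneckerMap_apply, Eunit, Matrix.of_apply]
  refine Finset.sum_eq_zero fun i hi => Finset.sum_eq_zero fun j hj => ?_
  simp only [Finset.mem_Icc, pr] at hi hj
  rw [if_neg (by omega), zero_mul]

lemma off4 (v c z : Fin (2 * n + 1)) :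
    (∑ i ∈ Icc (pr n n) (pr n 2), ∑ j ∈ Icc (i + 1) (pr n 1), Eunit F n j i ⊗ₖ Eunit F n i j) (v, c) (v, z) = 0 := by
  simp only [Matrix.sum_apply, Matrix.kroneckerMap_apply, Eunit, Matrix.of_apply]
  refine Finset.sum_eq_zero fun i hi => Finset.sum_eq_zero fun j hj => ?_
  simp only [Finset.mem_Icc, pr] at hi hj
  rw [if_neg (by omega), zero_mul]

lemma off5 (v c z : Fin (2 * n + 1)) :
    (∑ i ∈ Icc 1 n, ∑ j ∈ Icc (i + 1) n, Eunit F n j i ⊗ₖ Eunit F n i j) (v, c) (v, z) = 0 := by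
  simp only [Matrix.sum_apply, Matrix.kroneckerMap_apply, Eunit, Matrix.of_apply]
  refine Finset.sum_eq_zero fun i hi => Finset.sum_eq_zero fun j hj => ?_
  simp only [Finset.mem_Icc] at hi hj
  rw [if_neg (by omega), zero_mul]

lemma off6 (v c z : Fin (2 * n + 1)) :
    (∑ i ∈ Icc (pr n n) (pr n 2), ∑ j ∈ Icc (i + 1) (pr n 1), Eunit F n i j ⊗ₖ Eunit F n j i) (v, c) (v, z) = 0 := by
  simp only [Matrix.sum_apply, Matrix.kroneckerMap_apply, Eunit, Matrix.of_apply]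
  refine Finset.sum_eq_zero fun i hi => Finset.sum_eq_zero fun j hj => ?_
  simp only [Finset.mem_Icc, pr] at hi hj
  rw [if_neg (by omega), zero_mul]

lemma off7 (v c z : Fin (2 * n + 1)) :
    (∑ i ∈ Icc 2 n, ∑ j ∈ Icc (pr n (i - 1)) (pr n 1), Eunit F n j i ⊗ₖ Eunit F n i j) (v, c) (v, z) = 0 := by
  simp only [Matrix.sum_apply, Matrix.kroneckerMap_apply, Eunit, Matrix.of_apply]
  refine Finset.sum_eq_zero fun i hi => Finset.sum_eq_zero fun j hj => ?_
  simp only [Finset.mem_Icc, pr] at hi hj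
  rw [if_neg (by omega), zero_mul]

lemma off8 (v c z : Fin (2 * n + 1)) :
    (∑ i ∈ Icc 1 (n - 1), ∑ j ∈ Icc (pr n n) (pr n (i + 1)), Eunit F n i j ⊗ₖ Eunit F n j i) (v, c) (v, z) = 0 := by
  simp only [Matrix.sum_apply, Matrix.kroneckerMap_apply, Eunit, Matrix.of_apply]
  refine Finset.sum_eq_zero fun i hi => Finset.sum_eq_zero fun j hj => ?_
  simp only [Finset.mem_Icc, pr] at hi hj
  rw [if_neg (by omega), zero_mul]

lemma off9 (v c z : Fin (2 * n + 1)) :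
    (∑ i ∈ (Icc 1 (2 * n + 1)).erase (n + 1), Eunit F n i (n + 1) ⊗ₖ Eunit F n (n + 1) i) (v, c) (v, z) = 0 := by
  simp only [Matrix.sum_apply, Matrix.kroneckerMap_apply, Eunit, Matrix.of_apply]
  refine Finset.sum_eq_zero fun i hi => ?_
  simp only [Finset.mem_erase, Finset.mem_Icc] at hi
  rw [if_neg (by omega), zero_mul]

lemma off10 (v c z : Fin (2 * n + 1)) :
    (∑ j ∈ (Icc 1 (2 * n + 1)).erase (n + 1), Eunit F n (n + 1) j ⊗ₖ Eunit F n j (n + 1)) (v, c) (v, z) = 0 := by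
  simp only [Matrix.sum_apply, Matrix.kroneckerMap_apply, Eunit, Matrix.of_apply]
  refine Finset.sum_eq_zero fun i hi => ?_
  simp only [Finset.mem_erase, Finset.mem_Icc] at hi
  rw [if_neg (by omega), zero_mul]

lemma off11 (v c z : Fin (2 * n + 1)) :
    (∑ i ∈ (Icc 1 (2 * n + 1)).erase (n + 1), Eunit F n (pr n i) i ⊗ₖ Eunit F n i (pr n i)) (v, c) (v, z) = 0 := by
  simp only [Matrix.sum_apply, Matrix.kroneckerMap_apply, Eunit, Matrix.of_apply]
  refine Finset.sum_eq_zero fun i hi => ?_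
  simp only [Finset.mem_erase, Finset.mem_Icc] at hi
  rw [if_neg (by simp only [pr]; omega), zero_mul]

lemma diag1 (v c z : Fin (2 * n + 1)) :
    (∑ i ∈ (Icc 1 (2 * n + 1)).erase (n + 1), Eunit F n i i ⊗ₖ Eunit F n i i) (v, c) (v, z)
    = if (v : ℕ) + 1 = (c : ℕ) + 1 ∧ (c : ℕ) + 1 = (z : ℕ) + 1 ∧ (c : ℕ) + 1 ≠ n + 1 then 1 else 0 := by
  simp only [Matrix.sum_apply, Matrix.kroneckerMap_apply, Eunit, Matrix.of_apply]
  rw [Finset.sum_congr rfl (g := fun i => if (v : ℕ) + 1 = i then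
      (if ((c : ℕ) + 1 = (v : ℕ) + 1 ∧ (z : ℕ) + 1 = (v : ℕ) + 1) then (1 : F) else 0) else 0)
    (fun i _ => by split_ifs <;> simp_all <;> omega)]
  rw [Finset.sum_ite_eq]
  simp only [Finset.mem_erase, Finset.mem_Icc]
  split_ifs <;> first | rfl | omega

lemma diagmid (v c z : Fin (2 * n + 1)) :
    (Eunit F n (n + 1) (n + 1) ⊗ₖ Eunit F n (n + 1) (n + 1)) (v, c) (v, z)
    = if (v : ℕ) + 1 = n + 1 ∧ (c : ℕ) + 1 = n + 1 ∧ (z : ℕ) + 1 = n + 1 then 1 else 0 := by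
  simp only [Matrix.kroneckerMap_apply, Eunit, Matrix.of_apply]
  split_ifs <;> simp_all

lemma diagA (v c z : Fin (2 * n + 1)) :
    (∑ i ∈ Icc 1 (2 * n + 1), ∑ j ∈ Icc 1 (i - 1), Eunit F n i i ⊗ₖ Eunit F n j j) (v, c) (v, z)
    = if (c : ℕ) + 1 = (z : ℕ) + 1 ∧ (c : ℕ) < (v : ℕ) then 1 else 0 := by
  have hv : (v : ℕ) < 2 * n + 1 := v.isLt
  simp only [Matrix.sum_apply, Matrix.kroneckerMap_apply, Eunit, Matrix.of_apply]
  rw [Finset.sum_congr rfl (g := fun i => if (v : ℕ) + 1 = i then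
      (∑ j ∈ Icc 1 (i - 1), if (c : ℕ) + 1 = j ∧ (z : ℕ) + 1 = j then (1 : F) else 0) else 0)
    (fun i _ => by by_cases h : (v : ℕ) + 1 = i <;> simp [h])]
  rw [Finset.sum_ite_eq]
  rw [if_pos (by simp only [Finset.mem_Icc]; omega)]
  rw [Finset.sum_congr rfl (g := fun j => if (c : ℕ) + 1 = j then
      (if (c : ℕ) + 1 = (z : ℕ) + 1 then (1 : F) else 0) else 0)
    (fun j _ => by split_ifs <;> simp_all <;> omega)]
  rw [Finset.sum_ite_eq]
  simp only [Finset.mem_Icc]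
  split_ifs <;> first | rfl | omega

lemma diagB (t : F) (v c z : Fin (2 * n + 1)) :
    (∑ i ∈ Icc 1 (2 * n + 1), ∑ j ∈ Icc 1 (i - 1),
      t ^ (mwt n i - mwt n j) • (Eunit F n i (pr n j) ⊗ₖ Eunit F n (pr n i) j)) (v, c) (v, z)
    = if (c : ℕ) + 1 = (z : ℕ) + 1 ∧ (c : ℕ) < (v : ℕ) ∧ (v : ℕ) + 1 = pr n ((c : ℕ) + 1)
      then t ^ (2 * mwt n ((v : ℕ) + 1)) else 0 := by
  have hv : (v : ℕ) < 2 * n + 1 := v.isLt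
  have hz : (z : ℕ) < 2 * n + 1 := z.isLt
  have hc : (c : ℕ) < 2 * n + 1 := c.isLt
  simp only [Matrix.sum_apply, Matrix.smul_apply, Matrix.kroneckerMap_apply, Eunit,
    Matrix.of_apply, smul_eq_mul]
  rw [Finset.sum_congr rfl (g := fun i => if (v : ℕ) + 1 = i then
      (∑ j ∈ Icc 1 (i - 1), t ^ (mwt n i - mwt n j) *
        ((if ((v : ℕ) + 1 = i ∧ (v : ℕ) + 1 = pr n j) then (1 : F) else 0) *
         (if ((c : ℕ) + 1 = pr n i ∧ (z : ℕ) + 1 = j) then (1 : F) else 0))) else 0)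
    (fun i _ => by
      beta_reduce
      by_cases h : (v : ℕ) + 1 = i
      · rw [if_pos h]
      · rw [if_neg h]
        exact Finset.sum_eq_zero fun j _ => by
          rw [if_neg (fun hcc => h hcc.1), zero_mul, mul_zero])]
  rw [Finset.sum_ite_eq, if_pos (by simp only [Finset.mem_Icc]; omega)]
  rw [Finset.sum_congr rfl (g := fun j => if (z : ℕ) + 1 = j then
      (if ((v : ℕ) + 1 = pr n j ∧ (c : ℕ) + 1 = pr n ((v : ℕ) + 1))
        then t ^ (mwt n ((v : ℕ) + 1) - mwt n j) else 0) else 0)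
    (fun j _ => by
      beta_reduce
      by_cases hj : (z : ℕ) + 1 = j
      · rw [if_pos hj]
        by_cases hA : ((v : ℕ) + 1 = pr n j ∧ (c : ℕ) + 1 = pr n ((v : ℕ) + 1))
        · obtain ⟨a1, a2⟩ := hA
          rw [if_pos ⟨rfl, a1⟩, if_pos ⟨a2, hj⟩, if_pos ⟨a1, a2⟩, one_mul, mul_one]
        · rw [if_neg hA]
          by_cases a1 : (v : ℕ) + 1 = pr n j
          · rw [show (if ((c : ℕ) + 1 = pr n ((v : ℕ) + 1) ∧ (z : ℕ) + 1 = j) then (1 : F) else 0) = 0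
                from if_neg (fun hcc => hA ⟨a1, hcc.1⟩), mul_zero, mul_zero]
          · rw [show (if ((v : ℕ) + 1 = (v : ℕ) + 1 ∧ (v : ℕ) + 1 = pr n j) then (1 : F) else 0) = 0
                from if_neg (fun hcc => a1 hcc.2), zero_mul, mul_zero]
      · rw [if_neg hj,
          show (if ((c : ℕ) + 1 = pr n ((v : ℕ) + 1) ∧ (z : ℕ) + 1 = j) then (1 : F) else 0) = 0
            from if_neg (fun hcc => hj hcc.2), mul_zero, mul_zero])]
  rw [Finset.sum_ite_eq]
  by_cases hq : (c : ℕ) + 1 = (z : ℕ) + 1 ∧ (c : ℕ) < (v : ℕ) ∧ (v : ℕ) + 1 = pr n ((c : ℕ) + 1)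
  · obtain ⟨e1, e2, e3⟩ := hq
    have h4 : (v : ℕ) + 1 = pr n ((z : ℕ) + 1) := by rw [← e1]; exact e3
    have h5 : (c : ℕ) + 1 = pr n ((v : ℕ) + 1) := by
      rw [e3, pr_pr (by omega) (by omega)]
    rw [if_pos (by simp only [Finset.mem_Icc]; omega), if_pos ⟨h4, h5⟩,
      if_pos ⟨e1, e2, e3⟩]
    have hm : mwt n ((v : ℕ) + 1) = - mwt n ((z : ℕ) + 1) := by
      rw [h4, mwt_pr (by omega) (by omega)]
    congr 1
    rw [hm]; ring
  · rw [if_neg hq]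
    split_ifs with hP hC
    · exfalso
      obtain ⟨f1, f2⟩ := hC
      simp only [Finset.mem_Icc] at hP
      apply hq
      have hc1 : (c : ℕ) + 1 = (z : ℕ) + 1 := by
        rw [f2, f1, pr_pr (by omega) (by omega)]
      exact ⟨hc1, by omega, by rw [hc1, ← f1]⟩
    · rfl
    · rfl

/-- Closed form for `R` entries whose first tensor slot is diagonal. -/
lemma Rdiag (r s t : F) (v c z : Fin (2 * n + 1)) :
    Rmat F n r s t (v, c) (v, z)
    = (r⁻¹ * s) * (if (v : ℕ) + 1 = (c : ℕ) + 1 ∧ (c : ℕ) + 1 = (z : ℕ) + 1 ∧ (c : ℕ) + 1 ≠ n + 1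
        then (1 : F) else 0)
    + (if (v : ℕ) + 1 = n + 1 ∧ (c : ℕ) + 1 = n + 1 ∧ (z : ℕ) + 1 = n + 1 then 1 else 0)
    + (r⁻¹ * s - r * s⁻¹) *
      ((if (c : ℕ) + 1 = (z : ℕ) + 1 ∧ (c : ℕ) < (v : ℕ) then 1 else 0)
      - (if (c : ℕ) + 1 = (z : ℕ) + 1 ∧ (c : ℕ) < (v : ℕ) ∧ (v : ℕ) + 1 = pr n ((c : ℕ) + 1)
          then t ^ (2 * mwt n ((v : ℕ) + 1)) else 0)) := by
  simp only [Rmat, Matrix.add_apply, Matrix.sub_apply, Matrix.smul_apply, smul_eq_mul]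
  rw [diag1, diagmid, diagA, diagB, off1, off2, off3, off4, off5, off6, off7, off8,
    off9, off10, off11]
  ring

end rdiag
section tele
variable {F : Type*} [Field F] {n : ℕ}

lemma zp {t : F} (ht : t ≠ 0) (e : ℤ) :
    (t ^ (2 : ℤ) - t ^ (-2 : ℤ)) * t ^ e = t ^ (e + 2) - t ^ (e - 2) := by
  rw [sub_mul, ← zpow_add₀ ht, ← zpow_add₀ ht,
    show (2 : ℤ) + e = e + 2 by ring, show (-2 : ℤ) + e = e - 2 by ring]

lemma tele (hn : 1 ≤ n) {t : F} (ht : t ≠ 0) :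
    ∀ d i, 1 ≤ i → i + d = 2 * n + 1 →
    (t ^ (2 : ℤ) - t ^ (-2 : ℤ)) * ∑ k ∈ Icc (i + 1) (2 * n + 1), t ^ (-(2 * mwt n k))
    = t ^ (4 * (n : ℤ)) - (if i = n + 1 then 1 else t ^ (2 - 2 * mwt n i))
      + (if i ≤ n then t ^ (2 : ℤ) - t ^ (-2 : ℤ) else 0) := by
  intro d
  induction d with
  | zero =>
    intro i h1 h2
    have hi : i = 2 * n + 1 := by omega
    subst hi
    rw [Finset.Icc_eq_empty (by omega), Finset.sum_empty, mul_zero,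
      if_neg (by omega), if_neg (by omega), add_zero,
      show (2 : ℤ) - 2 * mwt n (2 * n + 1) = 4 * (n : ℤ) by
        simp only [mwt]; split_ifs <;> push_cast <;> omega,
      sub_self]
  | succ d ih =>
    intro i h1 h2
    rw [show Icc (i + 1) (2 * n + 1) = insert (i + 1) (Icc (i + 2) (2 * n + 1)) by
        ext a; simp only [Finset.mem_insert, Finset.mem_Icc]; omega,
      Finset.sum_insert (by simp only [Finset.mem_Icc]; omega),
      mul_add, ih (i + 1) (by omega) (by omega), zp ht]
    rcases (by omega : i + 1 ≤ n ∨ i = n ∨ i = n + 1 ∨ (n + 2 ≤ i ∧ i ≤ 2 * n)) with h | h | h | h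
    · have hm : mwt n i = mwt n (i + 1) + 2 := by
        simp only [mwt]; split_ifs <;> push_cast <;> omega
      rw [if_neg (by omega), if_pos (by omega), if_neg (by omega), if_pos (by omega),
        show -(2 * mwt n (i + 1)) + 2 = 2 - 2 * mwt n (i + 1) by ring,
        show -(2 * mwt n (i + 1)) - 2 = 2 - 2 * mwt n i by rw [hm]; ring]
      ring
    · have hm1 : mwt n (i + 1) = 0 := by simp only [mwt]; split_ifs <;> push_cast <;> omega
      have hm0 : mwt n i = 1 := by simp only [mwt]; split_ifs <;> push_cast <;> omega
      rw [if_pos (by omega), if_neg (by omega), if_neg (by omega), if_pos (by omega),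
        hm1, hm0,
        show -(2 * (0 : ℤ)) + 2 = 2 by ring, show -(2 * (0 : ℤ)) - 2 = -2 by ring,
        show (2 : ℤ) - 2 * 1 = 0 by ring, zpow_zero]
      ring
    · have hm1 : mwt n (i + 1) = -1 := by simp only [mwt]; split_ifs <;> push_cast <;> omega
      rw [if_neg (by omega), if_neg (by omega), if_pos (by omega), if_neg (by omega),
        hm1,
        show -(2 * (-1 : ℤ)) + 2 = 4 by ring, show -(2 * (-1 : ℤ)) - 2 = 0 by ring,
        show (2 : ℤ) - 2 * (-1) = 4 by ring, zpow_zero]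
      ring
    · have hm : mwt n i = mwt n (i + 1) + 2 := by
        simp only [mwt]; split_ifs <;> push_cast <;> omega
      rw [if_neg (by omega), if_neg (by omega), if_neg (by omega), if_neg (by omega),
        show -(2 * mwt n (i + 1)) + 2 = 2 - 2 * mwt n (i + 1) by ring,
        show -(2 * mwt n (i + 1)) - 2 = 2 - 2 * mwt n i by rw [hm]; ring]
      ring

end tele
section core
variable {F : Type*} [Field F] {n : ℕ}

lemma coreA (t : F) (ht : t ≠ 0) (c z : Fin (2 * n + 1)) :
    ∑ v : Fin (2 * n + 1), t ^ (-(2 * mwt n ((v : ℕ) + 1))) *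
      (t ^ (2 : ℤ) * (if (v : ℕ) + 1 = (c : ℕ) + 1 ∧ (c : ℕ) + 1 = (z : ℕ) + 1 ∧ (c : ℕ) + 1 ≠ n + 1
        then (1 : F) else 0))
    = if (c : ℕ) + 1 = (z : ℕ) + 1 ∧ (c : ℕ) + 1 ≠ n + 1
        then t ^ (2 - 2 * mwt n ((c : ℕ) + 1)) else 0 := by
  have hc : (c : ℕ) < 2 * n + 1 := c.isLt
  have hstep : ∀ v : Fin (2 * n + 1), t ^ (-(2 * mwt n ((v : ℕ) + 1))) *
      (t ^ (2 : ℤ) * (if (v : ℕ) + 1 = (c : ℕ) + 1 ∧ (c : ℕ) + 1 = (z : ℕ) + 1 ∧ (c : ℕ) + 1 ≠ n + 1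
        then (1 : F) else 0))
    = if (v : ℕ) + 1 = (c : ℕ) + 1 then
      (if (c : ℕ) + 1 = (z : ℕ) + 1 ∧ (c : ℕ) + 1 ≠ n + 1
        then t ^ (-(2 * mwt n ((v : ℕ) + 1))) * t ^ (2 : ℤ) else 0) else 0 := by
    intro v
    by_cases hv : (v : ℕ) + 1 = (c : ℕ) + 1
    · rw [if_pos hv]
      by_cases hrest : ((c : ℕ) + 1 = (z : ℕ) + 1 ∧ (c : ℕ) + 1 ≠ n + 1)
      · rw [if_pos ⟨hv, hrest.1, hrest.2⟩, if_pos hrest, mul_one]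
      · rw [if_neg (fun w => hrest ⟨w.2.1, w.2.2⟩), if_neg hrest, mul_zero, mul_zero]
    · rw [if_neg hv, if_neg (fun w => hv w.1), mul_zero, mul_zero]
  have hcol := fin_collapse (n := n) (A := (c : ℕ) + 1) (by omega) (by omega)
    (fun k => if (c : ℕ) + 1 = (z : ℕ) + 1 ∧ (c : ℕ) + 1 ≠ n + 1
      then t ^ (-(2 * mwt n k)) * t ^ (2 : ℤ) else 0)
  beta_reduce at hcol
  rw [Finset.sum_congr rfl (fun v _ => hstep v), hcol]
  by_cases hrest : ((c : ℕ) + 1 = (z : ℕ) + 1 ∧ (c : ℕ) + 1 ≠ n + 1)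
  · rw [if_pos hrest, if_pos hrest, ← zpow_add₀ ht]
    congr 1; ring
  · rw [if_neg hrest, if_neg hrest]

lemma coreB (t : F) (ht : t ≠ 0) (c z : Fin (2 * n + 1)) :
    ∑ v : Fin (2 * n + 1), t ^ (-(2 * mwt n ((v : ℕ) + 1))) *
      (if (v : ℕ) + 1 = n + 1 ∧ (c : ℕ) + 1 = n + 1 ∧ (z : ℕ) + 1 = n + 1 then (1 : F) else 0)
    = if (c : ℕ) + 1 = n + 1 ∧ (z : ℕ) + 1 = n + 1 then 1 else 0 := by
  have hstep : ∀ v : Fin (2 * n + 1), t ^ (-(2 * mwt n ((v : ℕ) + 1))) *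
      (if (v : ℕ) + 1 = n + 1 ∧ (c : ℕ) + 1 = n + 1 ∧ (z : ℕ) + 1 = n + 1 then (1 : F) else 0)
    = if (v : ℕ) + 1 = n + 1 then
      (if (c : ℕ) + 1 = n + 1 ∧ (z : ℕ) + 1 = n + 1
        then t ^ (-(2 * mwt n ((v : ℕ) + 1))) else 0) else 0 := by
    intro v
    by_cases hv : (v : ℕ) + 1 = n + 1
    · rw [if_pos hv]
      by_cases hrest : ((c : ℕ) + 1 = n + 1 ∧ (z : ℕ) + 1 = n + 1)
      · rw [if_pos ⟨hv, hrest.1, hrest.2⟩, if_pos hrest, mul_one]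
      · rw [if_neg (fun w => hrest ⟨w.2.1, w.2.2⟩), if_neg hrest, mul_zero]
    · rw [if_neg hv, if_neg (fun w => hv w.1), mul_zero]
  have hcol := fin_collapse (n := n) (A := n + 1) (by omega) (by omega)
    (fun k => if (c : ℕ) + 1 = n + 1 ∧ (z : ℕ) + 1 = n + 1
      then t ^ (-(2 * mwt n k)) else 0)
  beta_reduce at hcol
  rw [Finset.sum_congr rfl (fun v _ => hstep v), hcol]
  by_cases hrest : ((c : ℕ) + 1 = n + 1 ∧ (z : ℕ) + 1 = n + 1)
  · rw [if_pos hrest, if_pos hrest, show mwt n (n + 1) = 0 by simp [mwt],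
      show -(2 * (0 : ℤ)) = 0 by ring, zpow_zero]
  · rw [if_neg hrest, if_neg hrest]

lemma coreC (t : F) (ht : t ≠ 0) (c z : Fin (2 * n + 1)) :
    ∑ v : Fin (2 * n + 1), t ^ (-(2 * mwt n ((v : ℕ) + 1))) *
      ((t ^ (2 : ℤ) - t ^ (-2 : ℤ)) *
        (if (c : ℕ) + 1 = (z : ℕ) + 1 ∧ (c : ℕ) < (v : ℕ) then (1 : F) else 0))
    = if (c : ℕ) + 1 = (z : ℕ) + 1 then
        (t ^ (2 : ℤ) - t ^ (-2 : ℤ)) * ∑ k ∈ Icc ((c : ℕ) + 1 + 1) (2 * n + 1), t ^ (-(2 * mwt n k))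
      else 0 := by
  have hstep : ∀ v : Fin (2 * n + 1), t ^ (-(2 * mwt n ((v : ℕ) + 1))) *
      ((t ^ (2 : ℤ) - t ^ (-2 : ℤ)) *
        (if (c : ℕ) + 1 = (z : ℕ) + 1 ∧ (c : ℕ) < (v : ℕ) then (1 : F) else 0))
    = (if (c : ℕ) + 1 = (z : ℕ) + 1 ∧ (c : ℕ) + 1 < (v : ℕ) + 1
        then t ^ (-(2 * mwt n ((v : ℕ) + 1))) * (t ^ (2 : ℤ) - t ^ (-2 : ℤ)) else 0) := by
    intro v
    by_cases hq : ((c : ℕ) + 1 = (z : ℕ) + 1 ∧ (c : ℕ) < (v : ℕ))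
    · rw [if_pos hq, if_pos ⟨hq.1, by omega⟩, mul_one]
    · rw [if_neg hq, if_neg (fun w => hq ⟨w.1, by omega⟩), mul_zero, mul_zero]
  have hb := fin_sum_nat (n := n)
    (fun k => if (c : ℕ) + 1 = (z : ℕ) + 1 ∧ (c : ℕ) + 1 < k
      then t ^ (-(2 * mwt n k)) * (t ^ (2 : ℤ) - t ^ (-2 : ℤ)) else 0)
  beta_reduce at hb
  rw [Finset.sum_congr rfl (fun v _ => hstep v), hb]
  by_cases hcz : (c : ℕ) + 1 = (z : ℕ) + 1
  · rw [if_pos hcz]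
    have hstep2 : ∀ k ∈ Icc 1 (2 * n + 1),
        (if (c : ℕ) + 1 = (z : ℕ) + 1 ∧ (c : ℕ) + 1 < k
          then t ^ (-(2 * mwt n k)) * (t ^ (2 : ℤ) - t ^ (-2 : ℤ)) else 0)
        = (if (c : ℕ) + 1 < k
          then t ^ (-(2 * mwt n k)) * (t ^ (2 : ℤ) - t ^ (-2 : ℤ)) else 0) := by
      intro k _
      rw [if_congr (and_iff_right hcz) rfl rfl]
    rw [Finset.sum_congr rfl hstep2, ← Finset.sum_filter,
      show (Icc 1 (2 * n + 1)).filter (fun k => (c : ℕ) + 1 < k) = Icc ((c : ℕ) + 1 + 1) (2 * n + 1) by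
        ext a; simp only [Finset.mem_filter, Finset.mem_Icc]; omega,
      ← Finset.sum_mul, mul_comm]
  · rw [if_neg hcz, Finset.sum_eq_zero]
    intro k _
    rw [if_neg (fun w => hcz w.1)]

lemma coreD (t : F) (ht : t ≠ 0) (c z : Fin (2 * n + 1)) :
    ∑ v : Fin (2 * n + 1), t ^ (-(2 * mwt n ((v : ℕ) + 1))) *
      ((t ^ (2 : ℤ) - t ^ (-2 : ℤ)) *
        (if (c : ℕ) + 1 = (z : ℕ) + 1 ∧ (c : ℕ) < (v : ℕ) ∧ (v : ℕ) + 1 = pr n ((c : ℕ) + 1)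
          then t ^ (2 * mwt n ((v : ℕ) + 1)) else 0))
    = if (c : ℕ) + 1 = (z : ℕ) + 1 ∧ (c : ℕ) + 1 ≤ n
        then t ^ (2 : ℤ) - t ^ (-2 : ℤ) else 0 := by
  have hc : (c : ℕ) < 2 * n + 1 := c.isLt
  have hstep : ∀ v : Fin (2 * n + 1), t ^ (-(2 * mwt n ((v : ℕ) + 1))) *
      ((t ^ (2 : ℤ) - t ^ (-2 : ℤ)) *
        (if (c : ℕ) + 1 = (z : ℕ) + 1 ∧ (c : ℕ) < (v : ℕ) ∧ (v : ℕ) + 1 = pr n ((c : ℕ) + 1)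
          then t ^ (2 * mwt n ((v : ℕ) + 1)) else 0))
    = if (v : ℕ) + 1 = pr n ((c : ℕ) + 1) then
      (if (c : ℕ) + 1 = (z : ℕ) + 1 ∧ (c : ℕ) + 1 < (v : ℕ) + 1
        then t ^ (-(2 * mwt n ((v : ℕ) + 1))) * ((t ^ (2 : ℤ) - t ^ (-2 : ℤ)) * t ^ (2 * mwt n ((v : ℕ) + 1))) else 0)
      else 0 := by
    intro v
    by_cases hv : (v : ℕ) + 1 = pr n ((c : ℕ) + 1)
    · rw [if_pos hv]
      by_cases hq : ((c : ℕ) + 1 = (z : ℕ) + 1 ∧ (c : ℕ) < (v : ℕ))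
      · rw [if_pos ⟨hq.1, hq.2, hv⟩, if_pos ⟨hq.1, by omega⟩]
      · rw [if_neg (fun w => hq ⟨w.1, w.2.1⟩), if_neg (fun w => hq ⟨w.1, by omega⟩),
          mul_zero, mul_zero]
    · rw [if_neg hv, if_neg (fun w => hv w.2.2), mul_zero, mul_zero]
  have hcol := fin_collapse (n := n) (A := pr n ((c : ℕ) + 1)) (by simp only [pr]; omega) (by simp only [pr]; omega)
    (fun k => if (c : ℕ) + 1 = (z : ℕ) + 1 ∧ (c : ℕ) + 1 < k
      then t ^ (-(2 * mwt n k)) * ((t ^ (2 : ℤ) - t ^ (-2 : ℤ)) * t ^ (2 * mwt n k)) else 0)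
  beta_reduce at hcol
  rw [Finset.sum_congr rfl (fun v _ => hstep v), hcol]
  rw [if_congr (show ((c : ℕ) + 1 = (z : ℕ) + 1 ∧ (c : ℕ) + 1 < pr n ((c : ℕ) + 1))
      ↔ ((c : ℕ) + 1 = (z : ℕ) + 1 ∧ (c : ℕ) + 1 ≤ n) by
        simp only [pr]; constructor <;> (rintro ⟨w1, w2⟩; exact ⟨w1, by omega⟩)) rfl rfl]
  by_cases hq : ((c : ℕ) + 1 = (z : ℕ) + 1 ∧ (c : ℕ) + 1 ≤ n)
  · rw [if_pos hq, if_pos hq,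
      mul_comm (t ^ (2 : ℤ) - t ^ (-2 : ℤ)) _, ← mul_assoc, ← zpow_add₀ ht,
      show -(2 * mwt n (pr n ((c : ℕ) + 1))) + 2 * mwt n (pr n ((c : ℕ) + 1)) = 0 by ring,
      zpow_zero, one_mul]
  · rw [if_neg hq, if_neg hq]

lemma core (hn : 1 ≤ n) (r s t : F) (ht : t ≠ 0)
    (h1 : r⁻¹ * s = t ^ (2 : ℤ)) (h2 : r * s⁻¹ = t ^ (-2 : ℤ)) (c z : Fin (2 * n + 1)) :
    ∑ v : Fin (2 * n + 1), t ^ (-(2 * mwt n ((v : ℕ) + 1))) * Rmat F n r s t (v, c) (v, z)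
    = if c = z then t ^ (4 * (n : ℤ)) else 0 := by
  have hc : (c : ℕ) < 2 * n + 1 := c.isLt
  have hz : (z : ℕ) < 2 * n + 1 := z.isLt
  rw [Finset.sum_congr rfl (fun v _ => by rw [Rdiag r s t v c z, h1, h2])]
  simp only [mul_add, mul_sub, Finset.sum_add_distrib, Finset.sum_sub_distrib]
  rw [coreA t ht c z, coreB t ht c z, coreC t ht c z, coreD t ht c z]
  by_cases hcz : (c : ℕ) + 1 = (z : ℕ) + 1
  · rw [if_pos (show c = z from Fin.ext (by omega)), if_pos hcz,
      tele hn ht (2 * n + 1 - ((c : ℕ) + 1)) ((c : ℕ) + 1) (by omega) (by omega)]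
    by_cases hmid : (c : ℕ) + 1 = n + 1
    · rw [if_neg (fun w : ((c : ℕ) + 1 = (z : ℕ) + 1 ∧ (c : ℕ) + 1 ≠ n + 1) => w.2 hmid),
        if_pos (⟨hmid, by omega⟩ : ((c : ℕ) + 1 = n + 1 ∧ (z : ℕ) + 1 = n + 1)),
        if_pos hmid,
        if_neg (show ¬((c : ℕ) + 1 ≤ n) by omega),
        if_neg (fun w : ((c : ℕ) + 1 = (z : ℕ) + 1 ∧ (c : ℕ) + 1 ≤ n) => by omega),
        add_zero]
      ring
    · rw [if_pos (⟨hcz, hmid⟩ : ((c : ℕ) + 1 = (z : ℕ) + 1 ∧ (c : ℕ) + 1 ≠ n + 1)),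
        if_neg (fun w : ((c : ℕ) + 1 = n + 1 ∧ (z : ℕ) + 1 = n + 1) => hmid w.1),
        if_neg hmid]
      by_cases hle : (c : ℕ) + 1 ≤ n
      · rw [if_pos hle,
          if_pos (⟨hcz, hle⟩ : ((c : ℕ) + 1 = (z : ℕ) + 1 ∧ (c : ℕ) + 1 ≤ n))]
        ring
      · rw [if_neg hle,
          if_neg (fun w : ((c : ℕ) + 1 = (z : ℕ) + 1 ∧ (c : ℕ) + 1 ≤ n) => hle w.2),
          add_zero]
        ring
  · rw [if_neg (fun w : ((c : ℕ) + 1 = (z : ℕ) + 1 ∧ (c : ℕ) + 1 ≠ n + 1) => hcz w.1),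
      if_neg (fun w : ((c : ℕ) + 1 = n + 1 ∧ (z : ℕ) + 1 = n + 1) => hcz (by omega)),
      if_neg hcz,
      if_neg (fun w : ((c : ℕ) + 1 = (z : ℕ) + 1 ∧ (c : ℕ) + 1 ≤ n) => hcz w.1),
      if_neg (fun w : c = z => hcz (by rw [w]))]
    ring

end core
section main
variable {F : Type*} [Field F] {n : ℕ}

lemma K12_apply (t : F) (u v w p q e : Fin (2 * n + 1)) :
    K12 F n t (u, v, w) (p, q, e) = Kmat F n t (u, v) (p, q) * (if w = e then 1 else 0) := by
  simp [K12, Matrix.reindex_apply, Matrix.submatrix_apply, Equiv.prodAssoc,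
    Matrix.kroneckerMap_apply, Matrix.one_apply]

lemma R23_apply (r s t : F) (u v w p q e : Fin (2 * n + 1)) :
    R23 F n r s t (u, v, w) (p, q, e) = (if u = p then 1 else 0) * Rmat F n r s t (v, w) (q, e) := by
  simp [R23, Matrix.kroneckerMap_apply, Matrix.one_apply]

lemma assemble (hn : 1 ≤ n) (r s t : F) (ht : t ≠ 0)
    (h1 : r⁻¹ * s = t ^ (2 : ℤ)) (h2 : r * s⁻¹ = t ^ (-2 : ℤ))
    (a b c x y z : Fin (2 * n + 1)) :
    ∑ p : Fin (2 * n + 1), ∑ q : Fin (2 * n + 1),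
      (∑ v : Fin (2 * n + 1), Kmat F n t (a, b) (p, v) * Rmat F n r s t (v, c) (q, z)) *
        Kmat F n t (p, q) (x, y)
    = if c = z then t ^ (4 * (n : ℤ)) * Kmat F n t (a, b) (x, y) else 0 := by
  -- Step 1: push the outer K inside and swap sums so that v is outermost
  have st1 : ∀ p q : Fin (2 * n + 1),
      (∑ v : Fin (2 * n + 1), Kmat F n t (a, b) (p, v) * Rmat F n r s t (v, c) (q, z)) *
        Kmat F n t (p, q) (x, y)
      = ∑ v : Fin (2 * n + 1), Kmat F n t (a, b) (p, v) *
          (Rmat F n r s t (v, c) (q, z) * Kmat F n t (p, q) (x, y)) := by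
    intro p q
    rw [Finset.sum_mul]
    exact Finset.sum_congr rfl fun v _ => by ring
  rw [Finset.sum_congr rfl (fun p _ => Finset.sum_congr rfl (fun q _ => st1 p q))]
  rw [Finset.sum_congr rfl (fun p _ => Finset.sum_comm), Finset.sum_comm]
  -- Step 2: for each v, collapse p and q
  have step : ∀ v : Fin (2 * n + 1),
      ∑ p : Fin (2 * n + 1), ∑ q : Fin (2 * n + 1), Kmat F n t (a, b) (p, v) *
          (Rmat F n r s t (v, c) (q, z) * Kmat F n t (p, q) (x, y))
      = (if ((b : ℕ) + 1 = pr n ((a : ℕ) + 1) ∧ (x : ℕ) + 1 = pr n ((y : ℕ) + 1))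
          then t ^ (mwt n ((a : ℕ) + 1) - mwt n ((y : ℕ) + 1)) else 0)
        * (t ^ (-(2 * mwt n ((v : ℕ) + 1))) * Rmat F n r s t (v, c) (v, z)) := by
    intro v
    have hv : (v : ℕ) < 2 * n + 1 := v.isLt
    have hy : (y : ℕ) < 2 * n + 1 := y.isLt
    set P : Fin (2 * n + 1) := ⟨pr n ((v : ℕ) + 1) - 1, by simp only [pr]; omega⟩ with hPdef
    have hP1 : (P : ℕ) + 1 = pr n ((v : ℕ) + 1) := by simp only [hPdef, pr]; omega
    have hPP : pr n ((P : ℕ) + 1) = (v : ℕ) + 1 := by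
      rw [hP1, pr_pr (by omega) (by omega)]
    -- collapse p
    have hc1 : ∀ p : Fin (2 * n + 1),
        (∑ q : Fin (2 * n + 1), Kmat F n t (a, b) (p, v) *
          (Rmat F n r s t (v, c) (q, z) * Kmat F n t (p, q) (x, y)))
        = if (p : ℕ) + 1 = pr n ((v : ℕ) + 1) then
            ((if (b : ℕ) + 1 = pr n ((a : ℕ) + 1)
              then t ^ (mwt n ((a : ℕ) + 1) - mwt n ((v : ℕ) + 1)) else 0) *
            (∑ q : Fin (2 * n + 1), Rmat F n r s t (v, c) (q, z) * Kmat F n t (p, q) (x, y)))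
          else 0 := by
      intro p
      rw [← Finset.mul_sum, Kmat_apply]
      by_cases hp : (p : ℕ) + 1 = pr n ((v : ℕ) + 1)
      · rw [if_pos hp]
        by_cases hb : (b : ℕ) + 1 = pr n ((a : ℕ) + 1)
        · rw [if_pos ⟨hb, hp⟩, if_pos hb]
        · rw [if_neg (fun w => hb w.1), if_neg hb]
      · rw [if_neg (fun w => hp w.2), if_neg hp, zero_mul]
    rw [Finset.sum_congr rfl (fun p _ => hc1 p)]
    have hcol := fin_collapse' (n := n) (A := pr n ((v : ℕ) + 1))
      (by simp only [pr]; omega) (by simp only [pr]; omega)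
      (fun p => ((if (b : ℕ) + 1 = pr n ((a : ℕ) + 1)
              then t ^ (mwt n ((a : ℕ) + 1) - mwt n ((v : ℕ) + 1)) else 0) *
            (∑ q : Fin (2 * n + 1), Rmat F n r s t (v, c) (q, z) * Kmat F n t (p, q) (x, y))))
    beta_reduce at hcol
    rw [hcol]
    -- collapse q
    have hc2 : ∀ q : Fin (2 * n + 1), Rmat F n r s t (v, c) (q, z) * Kmat F n t (P, q) (x, y)
        = if (q : ℕ) + 1 = (v : ℕ) + 1 then
            (Rmat F n r s t (v, c) (q, z) *
              (if (x : ℕ) + 1 = pr n ((y : ℕ) + 1)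
                then t ^ (mwt n ((P : ℕ) + 1) - mwt n ((y : ℕ) + 1)) else 0))
          else 0 := by
      intro q
      rw [Kmat_apply]
      by_cases hq : (q : ℕ) + 1 = (v : ℕ) + 1
      · rw [if_pos hq]
        by_cases hx : (x : ℕ) + 1 = pr n ((y : ℕ) + 1)
        · rw [if_pos ⟨by rw [hPP]; exact hq, hx⟩, if_pos hx]
        · rw [if_neg (fun w => hx w.2), if_neg hx, mul_zero]
      · rw [if_neg (fun w => hq (by rw [← hPP]; exact w.1)), if_neg hq, mul_zero]
    rw [Finset.sum_congr rfl (fun q _ => hc2 q)]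
    have hcol2 := fin_collapse' (n := n) (A := (v : ℕ) + 1) (by omega) (by omega)
      (fun q => (Rmat F n r s t (v, c) (q, z) *
              (if (x : ℕ) + 1 = pr n ((y : ℕ) + 1)
                then t ^ (mwt n ((P : ℕ) + 1) - mwt n ((y : ℕ) + 1)) else 0)))
    beta_reduce at hcol2
    rw [hcol2, show (⟨(v : ℕ) + 1 - 1, by omega⟩ : Fin (2 * n + 1)) = v from Fin.ext (by simp)]
    -- now pure algebra
    have hmP : mwt n ((P : ℕ) + 1) = - mwt n ((v : ℕ) + 1) := by
      rw [hP1, mwt_pr (by omega) (by omega)]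
    by_cases hb : (b : ℕ) + 1 = pr n ((a : ℕ) + 1)
    · by_cases hx : (x : ℕ) + 1 = pr n ((y : ℕ) + 1)
      · rw [if_pos hb, if_pos hx, if_pos ⟨hb, hx⟩, hmP]
        have hE : t ^ (mwt n ((a : ℕ) + 1) - mwt n ((v : ℕ) + 1)) *
              t ^ (-mwt n ((v : ℕ) + 1) - mwt n ((y : ℕ) + 1))
            = t ^ (mwt n ((a : ℕ) + 1) - mwt n ((y : ℕ) + 1)) *
              t ^ (-(2 * mwt n ((v : ℕ) + 1))) := by
          rw [← zpow_add₀ ht, ← zpow_add₀ ht]; congr 1; ring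
        calc t ^ (mwt n ((a : ℕ) + 1) - mwt n ((v : ℕ) + 1)) *
              (Rmat F n r s t (v, c) (v, z) * t ^ (-mwt n ((v : ℕ) + 1) - mwt n ((y : ℕ) + 1)))
            = (t ^ (mwt n ((a : ℕ) + 1) - mwt n ((v : ℕ) + 1)) *
              t ^ (-mwt n ((v : ℕ) + 1) - mwt n ((y : ℕ) + 1))) * Rmat F n r s t (v, c) (v, z) := by
              ring
          _ = _ := by rw [hE]; ring
      · rw [if_neg hx,
          if_neg (fun w : ((b : ℕ) + 1 = pr n ((a : ℕ) + 1) ∧ (x : ℕ) + 1 = pr n ((y : ℕ) + 1)) =>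
            hx w.2)]
        simp
    · rw [if_neg hb,
        if_neg (fun w : ((b : ℕ) + 1 = pr n ((a : ℕ) + 1) ∧ (x : ℕ) + 1 = pr n ((y : ℕ) + 1)) =>
          hb w.1)]
      simp
  rw [Finset.sum_congr rfl (fun v _ => step v), ← Finset.mul_sum,
    core hn r s t ht h1 h2 c z, Kmat_apply]
  by_cases hcz : c = z
  · rw [if_pos hcz, if_pos hcz]
    ring
  · rw [if_neg hcz, if_neg hcz, mul_zero]

end main
/-- **Corollary 3.16** (positive case): `K₁₂ R₂₃ K₁₂ = (r⁻¹ s)^{2n} K₁₂`. -/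
theorem corollary_3_16 (n : ℕ) (hn : 1 ≤ n)
    (F : Type*) [Field F] (r s t : F)
    (hr : r ≠ 0) (hs : s ≠ 0) (ht : t ≠ 0) (hts : t ^ 2 = r⁻¹ * s) :
    K12 F n t * R23 F n r s t * K12 F n t = (r⁻¹ * s) ^ (2 * n) • K12 F n t := by
  have h1 : r⁻¹ * s = t ^ (2 : ℤ) := by
    rw [← hts, show (2 : ℤ) = ((2 : ℕ) : ℤ) from rfl, zpow_natCast]
  have h2 : r * s⁻¹ = t ^ (-2 : ℤ) := by
    have hinv : (r⁻¹ * s)⁻¹ = r * s⁻¹ := by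
      field_simp
    rw [← hinv, h1]
    exact (_root_.zpow_neg t 2).symm
  have hpow : (r⁻¹ * s) ^ (2 * n) = t ^ (4 * (n : ℤ)) := by
    rw [← hts, ← pow_mul, show 4 * (n : ℤ) = ((2 * (2 * n) : ℕ) : ℤ) by push_cast; ring,
      zpow_natCast]
  ext ⟨a, b, c⟩ ⟨x, y, z⟩
  simp only [Matrix.mul_apply, Matrix.smul_apply, smul_eq_mul, K12_apply, R23_apply,
    Fintype.sum_prod_type]
  simp only [ite_mul, mul_ite, mul_zero, mul_one, zero_mul, one_mul,
    Finset.sum_ite_eq, Finset.sum_ite_eq', Finset.mem_univ, if_true]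
  simp only [Finset.sum_ite_irrel, Finset.sum_const_zero,
    Finset.sum_ite_eq, Finset.sum_ite_eq', Finset.mem_univ, if_true]
  rw [assemble hn r s t ht h1 h2 a b c x y z, hpow]
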